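/- arXiv:1508.06958 — 5 statements merged into one kernel-verified Lean document; each statement's English description precedes it below -/
import Mathlib

section
/- The log-likelihood function of a two-component univariate Gaussian mixture is unbounded above: for any two distinct data points x₁, x₂ ∈ ℝ and any fixed α₀ ∈ (0,1), μ₂₀ ∈ ℝ, σ₂₀ > 0, the function σ₁ ↦ ℓ(α₀, x₁, μ₂₀, σ₁, σ₂₀) tends to +∞ as σ₁ → 0⁺. -/
open Real Filter Topology

/-- The two-component univariate Gaussian mixture density. -/
noncomputable def mixf (α μ₁ μ₂ σ₁ σ₂ x : ℝ) : ℝ :=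
  (1 / Real.sqrt (2 * Real.pi)) *
    (α / σ₁ * Real.exp (-(x - μ₁) ^ 2 / (2 * σ₁ ^ 2)) +
      (1 - α) / σ₂ * Real.exp (-(x - μ₂) ^ 2 / (2 * σ₂ ^ 2)))

lemma aux_mul_exp_neg_sq {k : ℝ} (hk : 0 < k) :
    Tendsto (fun y : ℝ => y * Real.exp (-(k * y ^ 2))) atTop (𝓝 0) := by
  have h1 : Tendsto (fun y : ℝ => k * y ^ 2) atTop atTop :=
    (tendsto_pow_atTop (n := 2) (by norm_num)).const_mul_atTop hk
  have h2 : Tendsto (fun y : ℝ => (k * y ^ 2) * Real.exp (-(k * y ^ 2))) atTop (𝓝 0) := by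
    have := (Real.tendsto_pow_mul_exp_neg_atTop_nhds_zero 1).comp h1
    simpa [Function.comp_def] using this
  have h3 : Tendsto (fun y : ℝ => (k * y)⁻¹) atTop (𝓝 0) :=
    tendsto_inv_atTop_zero.comp (tendsto_atTop_atTop_of_monotone
      (fun a b hab => by nlinarith) (fun b => ⟨b / k, by field_simp; exact le_rfl⟩))
  have h4 := h2.mul h3
  rw [mul_zero] at h4
  refine h4.congr' ?_
  filter_upwards [eventually_gt_atTop 0] with y hy
  field_simp

/-- The log-likelihood of a two-component Gaussian mixture is unbounded above:
with the first mean matched to the first data point, ℓ → ∞ as σ₁ → 0⁺. -/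
theorem loglik_unbounded (x₁ x₂ : ℝ) (hx : x₁ ≠ x₂) (α₀ : ℝ) (hα₀ : 0 < α₀ ∧ α₀ < 1)
    (μ₂₀ σ₂₀ : ℝ) (hσ₂₀ : 0 < σ₂₀) :
    Tendsto (fun σ₁ : ℝ =>
        Real.log (mixf α₀ x₁ μ₂₀ σ₁ σ₂₀ x₁) + Real.log (mixf α₀ x₁ μ₂₀ σ₁ σ₂₀ x₂))
      (nhdsWithin 0 (Set.Ioi 0)) atTop := by
  obtain ⟨hα1, hα2⟩ := hα₀
  set C : ℝ := 1 / Real.sqrt (2 * Real.pi) with hC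
  have hπ : 0 < Real.sqrt (2 * Real.pi) := Real.sqrt_pos.mpr (by positivity)
  have hCpos : 0 < C := by positivity
  set d₁ : ℝ := (1 - α₀) / σ₂₀ * Real.exp (-(x₁ - μ₂₀) ^ 2 / (2 * σ₂₀ ^ 2)) with hd₁
  set d₂ : ℝ := (1 - α₀) / σ₂₀ * Real.exp (-(x₂ - μ₂₀) ^ 2 / (2 * σ₂₀ ^ 2)) with hd₂
  have hd₂pos : 0 < d₂ := by
    apply mul_pos (div_pos (by linarith) hσ₂₀) (Real.exp_pos _)
  -- first term tends to atTop
  have hinv : Tendsto (fun σ₁ : ℝ => σ₁⁻¹) (nhdsWithin 0 (Set.Ioi 0)) atTop :=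
    tendsto_inv_nhdsGT_zero
  have h1 : Tendsto (fun σ₁ : ℝ => Real.log (mixf α₀ x₁ μ₂₀ σ₁ σ₂₀ x₁))
      (nhdsWithin 0 (Set.Ioi 0)) atTop := by
    have hmix : Tendsto (fun σ₁ : ℝ => mixf α₀ x₁ μ₂₀ σ₁ σ₂₀ x₁)
        (nhdsWithin 0 (Set.Ioi 0)) atTop := by
      have base : Tendsto (fun σ₁ : ℝ => C * (α₀ * σ₁⁻¹ + d₁))
          (nhdsWithin 0 (Set.Ioi 0)) atTop := by
        apply Tendsto.const_mul_atTop hCpos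
        exact Tendsto.atTop_add (hinv.const_mul_atTop hα1) tendsto_const_nhds
      refine base.congr' ?_
      filter_upwards [self_mem_nhdsWithin] with σ₁ (hσ₁ : 0 < σ₁)
      simp [mixf, hd₁, hC, sub_self, div_eq_mul_inv]
    exact Real.tendsto_log_atTop.comp hmix
  -- second term converges
  have h2 : Tendsto (fun σ₁ : ℝ => Real.log (mixf α₀ x₁ μ₂₀ σ₁ σ₂₀ x₂))
      (nhdsWithin 0 (Set.Ioi 0)) (𝓝 (Real.log (C * d₂))) := by
    set k : ℝ := (x₂ - x₁) ^ 2 / 2 with hk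
    have hkpos : 0 < k := by
      have : x₂ - x₁ ≠ 0 := sub_ne_zero.mpr (Ne.symm hx)
      positivity
    have hcomp : Tendsto (fun σ₁ : ℝ => σ₁⁻¹ * Real.exp (-(k * (σ₁⁻¹) ^ 2)))
        (nhdsWithin 0 (Set.Ioi 0)) (𝓝 0) := (aux_mul_exp_neg_sq hkpos).comp hinv
    have hmix : Tendsto (fun σ₁ : ℝ => mixf α₀ x₁ μ₂₀ σ₁ σ₂₀ x₂)
        (nhdsWithin 0 (Set.Ioi 0)) (𝓝 (C * d₂)) := by
      have base : Tendsto (fun σ₁ : ℝ =>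
          C * (α₀ * (σ₁⁻¹ * Real.exp (-(k * (σ₁⁻¹) ^ 2))) + d₂))
          (nhdsWithin 0 (Set.Ioi 0)) (𝓝 (C * (α₀ * 0 + d₂))) := by
        exact (((hcomp.const_mul α₀).add tendsto_const_nhds).const_mul C)
      rw [mul_zero, zero_add] at base
      refine base.congr' ?_
      filter_upwards [self_mem_nhdsWithin] with σ₁ (hσ₁ : 0 < σ₁)
      have hσ₁' : σ₁ ≠ 0 := ne_of_gt hσ₁
      simp only [mixf, hd₂, hC]
      rw [show -(x₂ - x₁) ^ 2 / (2 * σ₁ ^ 2) = -(k * (σ₁⁻¹) ^ 2) by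
        rw [hk]; field_simp]
      rw [div_eq_mul_inv]
      ring
    have hL : (C * d₂) ≠ 0 := ne_of_gt (mul_pos hCpos hd₂pos)
    exact (Real.continuousAt_log hL).tendsto.comp hmix
  exact h1.atTop_add h2
end

section
/- For any data x₁,…,x_N ∈ ℝ with N ≥ 1 and empirical mean x̄ = (1/N)∑xᵢ and empirical variance s² = (1/N)∑(xᵢ − x̄)² > 0, every parameter point (α, μ₁, μ₂, σ₁, σ₂) with μ₁ = μ₂ = x̄ and σ₁ = σ₂ = s is a critical point of the log-likelihood function ℓ of the two-component univariate Gaussian mixture model (all five partial derivatives of ℓ vanish there). -/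
/-!
Where the two components coincide the mixture is the single Gaussian `N(x̄, s²)` whatever the
weight is, so `∂ℓ/∂α = 0`. Moving one component alone changes `log f` at `α` (or `1 - α`) times
the rate of change of the log of that component, so the remaining partial derivatives are
multiples of the score equations of a single Gaussian, which vanish at its maximum-likelihood
estimate `(x̄, s)`.
-/

open Real

/-- The log-likelihood for data x₁,…,x_N. -/
noncomputable def loglik (N : ℕ) (x : Fin N → ℝ) (α μ₁ μ₂ σ₁ σ₂ : ℝ) : ℝ :=
  ∑ i, Real.log (mixf α μ₁ μ₂ σ₁ σ₂ (x i))

noncomputable def gaussianKernel (μ σ y : ℝ) : ℝ :=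
  exp (-(y - μ) ^ 2 / (2 * σ ^ 2)) / σ

theorem mixf_eq_gaussianKernel (α μ₁ μ₂ σ₁ σ₂ y : ℝ) :
    mixf α μ₁ μ₂ σ₁ σ₂ y =
      (√(2 * π))⁻¹ * (α * gaussianKernel μ₁ σ₁ y + (1 - α) * gaussianKernel μ₂ σ₂ y) := by
  unfold mixf gaussianKernel
  ring

theorem mixf_swap (α μ₁ μ₂ σ₁ σ₂ y : ℝ) :
    mixf α μ₁ μ₂ σ₁ σ₂ y = mixf (1 - α) μ₂ μ₁ σ₂ σ₁ y := by
  unfold mixf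
  ring

theorem loglik_swap (N : ℕ) (x : Fin N → ℝ) (α μ₁ μ₂ σ₁ σ₂ : ℝ) :
    loglik N x α μ₁ μ₂ σ₁ σ₂ = loglik N x (1 - α) μ₂ μ₁ σ₂ σ₁ := by
  simp only [loglik, mixf_swap α μ₁ μ₂ σ₁ σ₂]

theorem mixf_same_components (α β μ σ y : ℝ) : mixf α μ μ σ σ y = mixf β μ μ σ σ y := by
  unfold mixf
  ring

theorem gaussianKernel_ne_zero {σ : ℝ} (hσ : σ ≠ 0) (μ y : ℝ) : gaussianKernel μ σ y ≠ 0 :=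
  div_ne_zero (exp_pos _).ne' hσ

theorem hasDerivAt_gaussianKernel_mean (σ y μ : ℝ) :
    HasDerivAt (fun m => gaussianKernel m σ y) (gaussianKernel μ σ y * ((y - μ) / σ ^ 2)) μ := by
  have hexponent : HasDerivAt (fun m : ℝ => -(y - m) ^ 2 / (2 * σ ^ 2)) ((y - μ) / σ ^ 2) μ := by
    refine ((((hasDerivAt_id μ).const_sub y).pow 2).neg.div_const (2 * σ ^ 2)).congr_deriv ?_
    simp only [id_eq]
    ring
  exact (hexponent.exp.div_const σ).congr_deriv (by unfold gaussianKernel; ring)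

theorem hasDerivAt_gaussianKernel_std (μ y : ℝ) {σ : ℝ} (hσ : σ ≠ 0) :
    HasDerivAt (fun t => gaussianKernel μ t y)
      (gaussianKernel μ σ y * ((y - μ) ^ 2 / σ ^ 3 - 1 / σ)) σ := by
  have hexponent :
      HasDerivAt (fun t : ℝ => -(y - μ) ^ 2 / (2 * t ^ 2)) ((y - μ) ^ 2 / σ ^ 3) σ := by
    refine ((hasDerivAt_const σ (-(y - μ) ^ 2)).div ((hasDerivAt_pow 2 σ).const_mul 2)
      (by positivity)).congr_deriv ?_
    field_simp
    ring
  refine (hexponent.exp.div (hasDerivAt_id σ) hσ).congr_deriv ?_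
  simp only [gaussianKernel, id_eq]
  field_simp

theorem hasDerivAt_log_mixture_of_eq {u : ℝ → ℝ} {u' t₀ : ℝ} (c α : ℝ)
    (hu : HasDerivAt u u' t₀) (hc : c ≠ 0) (hu₀ : u t₀ ≠ 0) :
    HasDerivAt (fun t => log (c * (α * u t + (1 - α) * u t₀))) (α * (u' / u t₀)) t₀ := by
  have hmix := ((hu.const_mul α).add_const ((1 - α) * u t₀)).const_mul c
  have hmix₀ : c * (α * u t₀ + (1 - α) * u t₀) ≠ 0 := by
    rw [show α * u t₀ + (1 - α) * u t₀ = u t₀ by ring]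
    exact mul_ne_zero hc hu₀
  refine (hmix.log hmix₀).congr_deriv ?_
  field_simp
  ring

theorem hasDerivAt_log_mixf_mean₁ (α μ y : ℝ) {σ : ℝ} (hσ : σ ≠ 0) :
    HasDerivAt (fun m => log (mixf α m μ σ σ y)) (α * ((y - μ) / σ ^ 2)) μ := by
  simp only [mixf_eq_gaussianKernel]
  refine (hasDerivAt_log_mixture_of_eq _ α (hasDerivAt_gaussianKernel_mean σ y μ) (by positivity)
    (gaussianKernel_ne_zero hσ μ y)).congr_deriv ?_
  field_simp [gaussianKernel_ne_zero hσ μ y]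

theorem hasDerivAt_log_mixf_std₁ (α μ y : ℝ) {σ : ℝ} (hσ : σ ≠ 0) :
    HasDerivAt (fun t => log (mixf α μ μ t σ y)) (α * ((y - μ) ^ 2 / σ ^ 3 - 1 / σ)) σ := by
  simp only [mixf_eq_gaussianKernel]
  refine (hasDerivAt_log_mixture_of_eq _ α (hasDerivAt_gaussianKernel_std μ y hσ) (by positivity)
    (gaussianKernel_ne_zero hσ μ y)).congr_deriv ?_
  field_simp [gaussianKernel_ne_zero hσ μ y]

theorem hasDerivAt_loglik_mean₁ (N : ℕ) (x : Fin N → ℝ) (α μ : ℝ) {σ : ℝ} (hσ : σ ≠ 0) :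
    HasDerivAt (fun m => loglik N x α m μ σ σ) (∑ i, α * ((x i - μ) / σ ^ 2)) μ := by
  unfold loglik
  exact HasDerivAt.fun_sum fun i _ => hasDerivAt_log_mixf_mean₁ α μ (x i) hσ

theorem hasDerivAt_loglik_std₁ (N : ℕ) (x : Fin N → ℝ) (α μ : ℝ) {σ : ℝ} (hσ : σ ≠ 0) :
    HasDerivAt (fun t => loglik N x α μ μ t σ)
      (∑ i, α * ((x i - μ) ^ 2 / σ ^ 3 - 1 / σ)) σ := by
  unfold loglik
  exact HasDerivAt.fun_sum fun i _ => hasDerivAt_log_mixf_std₁ α μ (x i) hσ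

theorem Fin.sum_eq_mul_sum_div {N : ℕ} (f : Fin N → ℝ) : ∑ i, f i = N * ((∑ i, f i) / N) :=
  (mul_div_cancel_of_imp' fun hN => by obtain rfl := Nat.cast_eq_zero.mp hN; simp).symm

theorem sum_sub_mean_eq_zero {N : ℕ} (x : Fin N → ℝ) : ∑ i, (x i - (∑ j, x j) / N) = 0 := by
  rw [Finset.sum_sub_distrib, Finset.sum_const, Finset.card_univ, Fintype.card_fin, nsmul_eq_mul,
    ← Fin.sum_eq_mul_sum_div, sub_self]

theorem sum_mean_score_eq_zero {N : ℕ} (x : Fin N → ℝ) (α σ : ℝ) :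
    ∑ i, α * ((x i - (∑ j, x j) / N) / σ ^ 2) = 0 := by
  rw [← Finset.mul_sum, ← Finset.sum_div, sum_sub_mean_eq_zero, zero_div, mul_zero]

theorem sum_std_score_eq_zero {N : ℕ} (x : Fin N → ℝ) (α c : ℝ) {σ : ℝ} (hσ : σ ≠ 0)
    (hσ₂ : σ ^ 2 = (∑ i, (x i - c) ^ 2) / N) :
    ∑ i, α * ((x i - c) ^ 2 / σ ^ 3 - 1 / σ) = 0 := by
  rw [← Finset.mul_sum, Finset.sum_sub_distrib, ← Finset.sum_div, Finset.sum_const,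
    Finset.card_univ, Fintype.card_fin, nsmul_eq_mul,
    Fin.sum_eq_mul_sum_div fun i => (x i - c) ^ 2, ← hσ₂]
  field_simp
  ring

theorem trivial_critical_points_general (N : ℕ) (x : Fin N → ℝ)
    (xbar s : ℝ) (hxbar : xbar = (∑ i, x i) / N) (hs : 0 < s)
    (hs2 : s ^ 2 = (∑ i, (x i - xbar) ^ 2) / N)
    (α : ℝ) :
    deriv (fun a => loglik N x a xbar xbar s s) α = 0 ∧
    deriv (fun m₁ => loglik N x α m₁ xbar s s) xbar = 0 ∧
    deriv (fun m₂ => loglik N x α xbar m₂ s s) xbar = 0 ∧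
    deriv (fun t₁ => loglik N x α xbar xbar t₁ s) s = 0 ∧
    deriv (fun t₂ => loglik N x α xbar xbar s t₂) s = 0 := by
  have hweight : (fun a => loglik N x a xbar xbar s s) = fun _ => loglik N x 0 xbar xbar s s := by
    funext a
    simp only [loglik, mixf_same_components a 0]
  have hmean (β : ℝ) : deriv (fun m => loglik N x β m xbar s s) xbar = 0 := by
    rw [(hasDerivAt_loglik_mean₁ N x β xbar hs.ne').deriv, hxbar, sum_mean_score_eq_zero]
  have hstd (β : ℝ) : deriv (fun t => loglik N x β xbar xbar t s) s = 0 := by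
    rw [(hasDerivAt_loglik_std₁ N x β xbar hs.ne').deriv, sum_std_score_eq_zero x β xbar hs.ne' hs2]
  refine ⟨by rw [hweight, deriv_const], hmean α, ?_, hstd α, ?_⟩
  · simpa only [loglik_swap N x α xbar] using hmean (1 - α)
  · simpa only [loglik_swap N x α xbar xbar s] using hstd (1 - α)

/-- Any point with both means equal to the sample mean and both standard deviations
equal to the sample standard deviation is a critical point of the log-likelihood. -/
theorem trivial_critical_points (N : ℕ) (hN : 1 ≤ N) (x : Fin N → ℝ)
    (xbar s : ℝ) (hxbar : xbar = (∑ i, x i) / N) (hs : 0 < s)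
    (hs2 : s ^ 2 = (∑ i, (x i - xbar) ^ 2) / N)
    (α : ℝ) (hα : 0 < α ∧ α < 1) :
    deriv (fun a => loglik N x a xbar xbar s s) α = 0 ∧
    deriv (fun m₁ => loglik N x α m₁ xbar s s) xbar = 0 ∧
    deriv (fun m₂ => loglik N x α xbar m₂ s s) xbar = 0 ∧
    deriv (fun t₁ => loglik N x α xbar xbar t₁ s) s = 0 ∧
    deriv (fun t₂ => loglik N x α xbar xbar s t₂) s = 0 :=
  trivial_critical_points_general N x xbar s hxbar hs hs2 α
end

section
/- Let x > 0 and let (α̂, μ̂) be an interior critical point of ℓ(α,μ) = log(α·e^{−μ²} + (1−α)) + log(α·e^{−(μ−x)²} + (1−α)·e^{−x²}) with 0 < α̂ < 1 and 0 < μ̂ ≤ x. Then μ̂ satisfies the equation (x − μ̂)·e^{μ̂²} − x + μ̂·e^{−μ̂(2x−μ̂)} = 0. -/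
open Real

/-- The (constant-shifted) log-likelihood of the sample {0, x} for the mixture
α·N(μ,1/2) + (1−α)·N(0,1/2). -/
noncomputable def ell (x α μ : ℝ) : ℝ :=
  Real.log (α * Real.exp (-μ ^ 2) + (1 - α)) +
    Real.log (α * Real.exp (-(μ - x) ^ 2) + (1 - α) * Real.exp (-x ^ 2))

/-- At any interior critical point (α̂, μ̂) with 0 < μ̂ ≤ x, the estimate μ̂ satisfies
the transcendental critical equation (x−μ̂)e^{μ̂²} − x + μ̂e^{−μ̂(2x−μ̂)} = 0. -/
theorem critical_equation (x αh μh : ℝ) (hx : 0 < x)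
    (hα : 0 < αh ∧ αh < 1) (hμ : 0 < μh ∧ μh ≤ x)
    (hcα : deriv (fun a => ell x a μh) αh = 0)
    (hcμ : deriv (fun m => ell x αh m) μh = 0) :
    (x - μh) * Real.exp (μh ^ 2) - x + μh * Real.exp (-μh * (2 * x - μh)) = 0 := by
  obtain ⟨hα0, hα1⟩ := hα
  obtain ⟨hμ0, hμx⟩ := hμ
  set e1 := Real.exp (-μh ^ 2) with he1
  set e2 := Real.exp (-(μh - x) ^ 2) with he2
  set e3 := Real.exp (-x ^ 2) with he3
  have he1p : 0 < e1 := Real.exp_pos _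
  have he2p : 0 < e2 := Real.exp_pos _
  have he3p : 0 < e3 := Real.exp_pos _
  set A1 := αh * e1 + (1 - αh) with hA1def
  set A2 := αh * e2 + (1 - αh) * e3 with hA2def
  have hA1 : 0 < A1 := by
    have : 0 < 1 - αh := by linarith
    positivity
  have hA2 : 0 < A2 := by
    have : 0 < 1 - αh := by linarith
    positivity
  -- derivative in α
  have dα : HasDerivAt (fun a => ell x a μh)
      ((e1 - 1) / A1 + (e2 - e3) / A2) αh := by
    unfold ell
    have d1 : HasDerivAt (fun a : ℝ => a * e1 + (1 - a)) (e1 - 1) αh := by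
      have := ((hasDerivAt_id αh).mul_const e1).add
        ((hasDerivAt_const αh (1:ℝ)).sub (hasDerivAt_id αh))
      exact this.congr_deriv (by ring)
    have d2 : HasDerivAt (fun a : ℝ => a * e2 + (1 - a) * e3) (e2 - e3) αh := by
      have := ((hasDerivAt_id αh).mul_const e2).add
        (((hasDerivAt_const αh (1:ℝ)).sub (hasDerivAt_id αh)).mul_const e3)
      exact this.congr_deriv (by ring)
    exact (d1.log hA1.ne').add (d2.log hA2.ne')
  -- derivative in μ
  have dμ : HasDerivAt (fun m => ell x αh m)
      (αh * (e1 * -(2 * μh)) / A1 + αh * (e2 * -(2 * (μh - x))) / A2) μh := by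
    unfold ell
    have p1 : HasDerivAt (fun m : ℝ => -m ^ 2) (-(2 * μh)) μh := by
      have := (hasDerivAt_pow 2 μh).neg
      exact this.congr_deriv (by norm_num)
    have p2 : HasDerivAt (fun m : ℝ => -(m - x) ^ 2) (-(2 * (μh - x))) μh := by
      have := (((hasDerivAt_id μh).sub_const x).pow 2).neg
      exact this.congr_deriv (by norm_num)
    have q1 : HasDerivAt (fun m : ℝ => αh * Real.exp (-m ^ 2) + (1 - αh))
        (αh * (e1 * -(2 * μh))) μh := by
      have := (p1.exp.const_mul αh).add_const (1 - αh)
      simpa [he1] using this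
    have q2 : HasDerivAt (fun m : ℝ => αh * Real.exp (-(m - x) ^ 2) + (1 - αh) * e3)
        (αh * (e2 * -(2 * (μh - x)))) μh := by
      have := (p2.exp.const_mul αh).add_const ((1 - αh) * e3)
      simpa [he2] using this
    exact (q1.log hA1.ne').add (q2.log hA2.ne')
  have eqα : (e1 - 1) / A1 + (e2 - e3) / A2 = 0 := by rw [← dα.deriv]; exact hcα
  have eqμ : αh * (e1 * -(2 * μh)) / A1 + αh * (e2 * -(2 * (μh - x))) / A2 = 0 := by
    rw [← dμ.deriv]; exact hcμ
  -- clear denominators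
  have E1 : (e1 - 1) * A2 + (e2 - e3) * A1 = 0 := by
    have h : ((e1 - 1) / A1 + (e2 - e3) / A2) * (A1 * A2) = 0 := by rw [eqα]; ring
    field_simp at h
    linarith
  have E2 : μh * e1 * A2 + (μh - x) * e2 * A1 = 0 := by
    have h : (αh * (e1 * -(2 * μh)) / A1 + αh * (e2 * -(2 * (μh - x))) / A2)
        * (A1 * A2) = 0 := by rw [eqμ]; ring
    field_simp at h
    have h2 : (-2 * αh) * (μh * e1 * A2 + (μh - x) * e2 * A1) = 0 := by linarith
    have hne : (-2 * αh) ≠ 0 := by positivity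
    exact (mul_eq_zero.mp h2).resolve_left hne
  -- eliminate A1, A2 (determinant)
  have hdet : ((e1 - 1) * ((μh - x) * e2) - (μh * e1) * (e2 - e3)) * A1 = 0 := by
    linear_combination (e1 - 1) * E2 - (μh * e1) * E1
  have hcross : (e1 - 1) * ((μh - x) * e2) - (μh * e1) * (e2 - e3) = 0 :=
    (mul_eq_zero.mp hdet).resolve_right hA1.ne'
  -- exponential identity: e1 * e3 = e2 * exp(-(2 μ x))
  have hid : e1 * e3 = e2 * Real.exp (-(2 * μh * x)) := by
    rw [he1, he2, he3, ← Real.exp_add, ← Real.exp_add]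
    congr 1
    ring
  -- key scalar equation
  have hK : e2 * (x * e1 - (x - μh) - μh * Real.exp (-(2 * μh * x))) = 0 := by
    linear_combination μh * hid - hcross
  have hK' : x * e1 - (x - μh) - μh * Real.exp (-(2 * μh * x)) = 0 :=
    (mul_eq_zero.mp hK).resolve_left he2p.ne'
  -- conclude
  have hmul : Real.exp (μh ^ 2) * e1 = 1 := by
    rw [he1, ← Real.exp_add]
    simp
  rw [show -μh * (2 * x - μh) = μh ^ 2 + -(2 * μh * x) by ring, Real.exp_add]
  linear_combination (-Real.exp (μh ^ 2)) * hK' + x * hmul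
end

section
/- Assume the Lindemann–Weierstrass theorem: for distinct algebraic numbers u₁,…,u_r, the exponentials e^{u₁},…,e^{u_r} are linearly independent over the algebraic numbers. Let x > 0 and μ̂ with 0 < μ̂ ≤ x satisfy (x − μ̂)·e^{μ̂²} − x + μ̂·e^{−μ̂(2x−μ̂)} = 0 and μ̂ ≠ x. Then x and μ̂ cannot both be algebraic over ℚ; in particular if x ∈ ℚ then μ̂ is transcendental. -/
/-!
The critical equation is the vanishing of the linear combination
(x - μ̂)·e^{μ̂²} + (-x)·e^0 + μ̂·e^{-μ̂(2x - μ̂)} of three exponentials. If x and μ̂ were algebraic,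
its exponents and coefficients would be algebraic and the exponents pairwise distinct, so
Lindemann–Weierstrass would force the coefficient μ̂ to vanish, contradicting μ̂ > 0.
-/

open Real

/-- Lindemann–Weierstrass: exponentials of distinct algebraic numbers are linearly
independent over the algebraic numbers. -/
def LindemannWeierstrass : Prop :=
  ∀ (r : ℕ) (u c : Fin r → ℝ), Function.Injective u →
    (∀ i, IsAlgebraic ℚ (u i)) → (∀ i, IsAlgebraic ℚ (c i)) →
    (∑ i, c i * Real.exp (u i)) = 0 → ∀ i, c i = 0

theorem LindemannWeierstrass.eq_zero_of_three (LW : LindemannWeierstrass) {a b c α β γ : ℝ}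
    (hαβ : α ≠ β) (hαγ : α ≠ γ) (hβγ : β ≠ γ)
    (hα : IsAlgebraic ℚ α) (hβ : IsAlgebraic ℚ β) (hγ : IsAlgebraic ℚ γ)
    (ha : IsAlgebraic ℚ a) (hb : IsAlgebraic ℚ b) (hc : IsAlgebraic ℚ c)
    (h : a * exp α + b * exp β + c * exp γ = 0) :
    a = 0 ∧ b = 0 ∧ c = 0 := by
  have hinj : Function.Injective ![α, β, γ] := by
    intro i j
    fin_cases i <;> fin_cases j <;> simp [hαβ, hαγ, hβγ, hαβ.symm, hαγ.symm, hβγ.symm]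
  have hzero := LW 3 ![α, β, γ] ![a, b, c] hinj
    (by simp [Fin.forall_fin_succ, hα, hβ, hγ]) (by simp [Fin.forall_fin_succ, ha, hb, hc])
    (by simpa [Fin.sum_univ_three] using h)
  exact ⟨hzero 0, hzero 1, hzero 2⟩

theorem mle_transcendental_general (LW : LindemannWeierstrass) (x μh : ℝ)
    (hμ : 0 < μh ∧ μh ≤ x)
    (heq : (x - μh) * Real.exp (μh ^ 2) - x + μh * Real.exp (-μh * (2 * x - μh)) = 0) :
    ¬(IsAlgebraic ℚ x ∧ IsAlgebraic ℚ μh) ∧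
      ((∃ q : ℚ, (q : ℝ) = x) → Transcendental ℚ μh) := by
  obtain ⟨hμ0, hμx⟩ := hμ
  have hsq_pos : 0 < μh ^ 2 := by positivity
  have hexp_neg : -μh * (2 * x - μh) < 0 := by nlinarith
  have key : ¬(IsAlgebraic ℚ x ∧ IsAlgebraic ℚ μh) := by
    rintro ⟨hx, hμ⟩
    have hcomb : (x - μh) * exp (μh ^ 2) + -x * exp 0 + μh * exp (-μh * (2 * x - μh)) = 0 := by
      rw [exp_zero]; linarith
    have hexp_alg : IsAlgebraic ℚ (-μh * (2 * x - μh)) := by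
      rw [two_mul]; exact hμ.neg.mul ((hx.add hx).sub hμ)
    have hcoeffs := LW.eq_zero_of_three hsq_pos.ne' (hsq_pos.trans' hexp_neg).ne' hexp_neg.ne'
      (hμ.pow 2) isAlgebraic_zero hexp_alg (hx.sub hμ) hx.neg hμ hcomb
    exact hμ0.ne' hcoeffs.2.2
  refine ⟨key, ?_⟩
  rintro ⟨q, rfl⟩ hμ_alg
  exact key ⟨isAlgebraic_algebraMap q, hμ_alg⟩

/-- If 0 < μ̂ ≤ x, μ̂ ≠ x, and μ̂ satisfies the critical equation, then x and μ̂ are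
not both algebraic over ℚ; in particular, if x is rational then μ̂ is transcendental. -/
theorem mle_transcendental (LW : LindemannWeierstrass) (x μh : ℝ) (hx : 0 < x)
    (hμ : 0 < μh ∧ μh ≤ x) (hne : μh ≠ x)
    (heq : (x - μh) * Real.exp (μh ^ 2) - x + μh * Real.exp (-μh * (2 * x - μh)) = 0) :
    ¬(IsAlgebraic ℚ x ∧ IsAlgebraic ℚ μh) ∧
      ((∃ q : ℚ, (q : ℝ) = x) → Transcendental ℚ μh) :=
  mle_transcendental_general LW x μh hμ heq
end

section
/- For real numbers μ₁, μ₂, σ₁, σ₂ with σ₁, σ₂ > 0, suppose for three distinct reals x₁, x₂, x₃ and all choices k ∈ {1,2}³ the sums ∑_{j=1}^{3} (x_j − μ_{k_j})²/(2σ_{k_j}²) take the same value. If moreover x₁ + x₂ ≠ 2x₃ (the points are in general position), then (μ₁, σ₁) = (μ₂, σ₂). -/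
/-!
Changing a single coordinate of `k` shows that each point separately satisfies
`(x - μ₁)² / σ₁² = (x - μ₂)² / σ₂²`. Cleared of denominators this is a polynomial identity of
degree at most two in `x` holding at three distinct points, so all its coefficients vanish:
the leading one gives `σ₁² = σ₂²` and the linear one then gives `μ₁ = μ₂`.
-/

open Finset

theorem apply_eq_apply_of_sum_indep {ι α M : Type*} [Fintype ι] [DecidableEq ι]
    [AddCancelCommMonoid M] (f : ι → α → M)
    (hf : ∀ k k' : ι → α, ∑ j, f j (k j) = ∑ j, f j (k' j)) (i : ι) (a b : α) :
    f i a = f i b := by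
  have sum_update : ∀ c : α,
      ∑ j, f j (Function.update (fun _ ↦ a) i c j) = f i c + ∑ j ∈ univ.erase i, f j a := by
    intro c
    rw [← add_sum_erase _ _ (mem_univ i), Function.update_self]
    congr 1
    refine sum_congr rfl fun j hj ↦ ?_
    rw [Function.update_of_ne (ne_of_mem_erase hj)]
  have := hf (Function.update (fun _ ↦ a) i a) (Function.update (fun _ ↦ a) i b)
  rwa [sum_update, sum_update, add_left_inj] at this

theorem quadratic_coeffs_eq_zero_of_three_roots {R : Type*} [CommRing R] [IsDomain R]
    {a b c x y z : R} (hxy : x ≠ y) (hxz : x ≠ z) (hyz : y ≠ z)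
    (hx : a * x ^ 2 + b * x + c = 0) (hy : a * y ^ 2 + b * y + c = 0)
    (hz : a * z ^ 2 + b * z + c = 0) :
    a = 0 ∧ b = 0 ∧ c = 0 := by
  have slope_xy : a * (x + y) + b = 0 := by
    have : (x - y) * (a * (x + y) + b) = 0 := by linear_combination hx - hy
    exact (mul_eq_zero.1 this).resolve_left (sub_ne_zero.2 hxy)
  have slope_xz : a * (x + z) + b = 0 := by
    have : (x - z) * (a * (x + z) + b) = 0 := by linear_combination hx - hz
    exact (mul_eq_zero.1 this).resolve_left (sub_ne_zero.2 hxz)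
  have ha : a = 0 := by
    have : (y - z) * a = 0 := by linear_combination slope_xy - slope_xz
    exact (mul_eq_zero.1 this).resolve_left (sub_ne_zero.2 hyz)
  have hb : b = 0 := by linear_combination slope_xy - (x + y) * ha
  exact ⟨ha, hb, by linear_combination hx - x ^ 2 * ha - x * hb⟩

theorem quadratic_of_sq_div_eq_sq_div {μ₁ μ₂ σ₁ σ₂ x : ℝ} (hσ₁ : σ₁ ≠ 0) (hσ₂ : σ₂ ≠ 0)
    (h : (x - μ₁) ^ 2 / (2 * σ₁ ^ 2) = (x - μ₂) ^ 2 / (2 * σ₂ ^ 2)) :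
    (σ₂ ^ 2 - σ₁ ^ 2) * x ^ 2 + 2 * (σ₁ ^ 2 * μ₂ - σ₂ ^ 2 * μ₁) * x
      + (σ₂ ^ 2 * μ₁ ^ 2 - σ₁ ^ 2 * μ₂ ^ 2) = 0 := by
  field_simp at h
  linear_combination h

theorem eq_of_sq_div_eq_sq_div_of_three_points {μ₁ μ₂ σ₁ σ₂ x₁ x₂ x₃ : ℝ}
    (hσ₁ : 0 < σ₁) (hσ₂ : 0 < σ₂) (h12 : x₁ ≠ x₂) (h13 : x₁ ≠ x₃) (h23 : x₂ ≠ x₃)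
    (h : ∀ x ∈ ({x₁, x₂, x₃} : Set ℝ),
      (x - μ₁) ^ 2 / (2 * σ₁ ^ 2) = (x - μ₂) ^ 2 / (2 * σ₂ ^ 2)) :
    μ₁ = μ₂ ∧ σ₁ = σ₂ := by
  have quad := fun x hx ↦ quadratic_of_sq_div_eq_sq_div hσ₁.ne' hσ₂.ne' (h x hx)
  obtain ⟨hsq, hlin, -⟩ := quadratic_coeffs_eq_zero_of_three_roots h12 h13 h23
    (quad x₁ (by simp)) (quad x₂ (by simp)) (quad x₃ (by simp))
  have hσ : σ₁ = σ₂ := (sq_eq_sq₀ hσ₁.le hσ₂.le).1 (sub_eq_zero.1 hsq).symm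
  refine ⟨?_, hσ⟩
  subst hσ
  have : σ₁ ^ 2 * (μ₂ - μ₁) = 0 := by linear_combination hlin / 2
  exact (sub_eq_zero.1 ((mul_eq_zero.1 this).resolve_left (by positivity))).symm

theorem equal_exponents_implies_equal_components_general
    (μ₁ μ₂ σ₁ σ₂ : ℝ) (hσ₁ : 0 < σ₁) (hσ₂ : 0 < σ₂)
    (x₁ x₂ x₃ : ℝ) (h12 : x₁ ≠ x₂) (h13 : x₁ ≠ x₃) (h23 : x₂ ≠ x₃)
    (hconst : ∀ k k' : Fin 3 → Fin 2,
      (∑ j, (![x₁, x₂, x₃] j - ![μ₁, μ₂] (k j)) ^ 2 / (2 * (![σ₁, σ₂] (k j)) ^ 2)) =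
      (∑ j, (![x₁, x₂, x₃] j - ![μ₁, μ₂] (k' j)) ^ 2 / (2 * (![σ₁, σ₂] (k' j)) ^ 2))) :
    μ₁ = μ₂ ∧ σ₁ = σ₂ := by
  refine eq_of_sq_div_eq_sq_div_of_three_points hσ₁ hσ₂ h12 h13 h23 ?_
  have pointwise := fun i ↦ apply_eq_apply_of_sum_indep
    (fun j c ↦ (![x₁, x₂, x₃] j - ![μ₁, μ₂] c) ^ 2 / (2 * (![σ₁, σ₂] c) ^ 2)) hconst i 0 1
  rintro x (rfl | rfl | rfl)
  exacts [pointwise 0, pointwise 1, pointwise 2]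

/-- If all 8 sums ∑_{j=1}^{3}(x_j − μ_{k_j})²/(2σ_{k_j}²), for k ∈ {1,2}³, take the same
value, and the three distinct points are in general position, then the two Gaussian
components coincide. -/
theorem equal_exponents_implies_equal_components
    (μ₁ μ₂ σ₁ σ₂ : ℝ) (hσ₁ : 0 < σ₁) (hσ₂ : 0 < σ₂)
    (x₁ x₂ x₃ : ℝ) (h12 : x₁ ≠ x₂) (h13 : x₁ ≠ x₃) (h23 : x₂ ≠ x₃)
    (hgen : x₁ + x₂ ≠ 2 * x₃)
    (hconst : ∀ k k' : Fin 3 → Fin 2,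
      (∑ j, (![x₁, x₂, x₃] j - ![μ₁, μ₂] (k j)) ^ 2 / (2 * (![σ₁, σ₂] (k j)) ^ 2)) =
      (∑ j, (![x₁, x₂, x₃] j - ![μ₁, μ₂] (k' j)) ^ 2 / (2 * (![σ₁, σ₂] (k' j)) ^ 2))) :
    μ₁ = μ₂ ∧ σ₁ = σ₂ :=
  equal_exponents_implies_equal_components_general μ₁ μ₂ σ₁ σ₂ hσ₁ hσ₂ x₁ x₂ x₃ h12 h13 h23 hconst
end
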